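/- If T is a quasinormal operator unitarily equivalent to N ⊕ (A ⊗ S) with N normal, A positive, and S the unilateral shift, then the Toeplitz-harmonic subspace T(T) is contained (after conjugation by the same unitary) in N(N) ⊕ (W(A) ⊗ T(S)), where N(N) is the abelian von Neumann algebra generated by N and I, W(A) is the WOT-closed algebra generated by A and I, and T(S) is the Toeplitz-harmonic subspace generated by S. -/

import Mathlib

open scoped InnerProductSpace ComplexOrder
noncomputable section

/-- Pairs of square-summable-type sequences inducing ultraweakly continuous functionals. -/
def UWPair (H : Type*) [NormedAddCommGroup H] [InnerProductSpace ℂ H] : Type _ :=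
  {p : (ℕ → H) × (ℕ → H) // Summable fun n => ‖p.1 n‖ * ‖p.2 n‖}

/-- The ultraweak (weak-star, sigma-weak) topology on B(H). -/
def ultraweak (H : Type*) [NormedAddCommGroup H] [InnerProductSpace ℂ H] :
    TopologicalSpace (H →L[ℂ] H) :=
  TopologicalSpace.induced
    (fun A => fun p : UWPair H => ∑' n, ⟪p.1.1 n, A (p.1.2 n)⟫_ℂ) Pi.topologicalSpace

/-- Weak-star closedness of a set of operators. -/
def WeakStarClosed {H : Type*} [NormedAddCommGroup H] [InnerProductSpace ℂ H]
    (S : Set (H →L[ℂ] H)) : Prop :=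
  @IsClosed _ (ultraweak H) S

/-- Weak-star closure. -/
def wstarClosure {H : Type*} [NormedAddCommGroup H] [InnerProductSpace ℂ H]
    (S : Set (H →L[ℂ] H)) : Set (H →L[ℂ] H) :=
  @closure _ (ultraweak H) S

/-- Weak-star closed linear span. -/
def wstarSpan {H : Type*} [NormedAddCommGroup H] [InnerProductSpace ℂ H]
    (S : Set (H →L[ℂ] H)) : Set (H →L[ℂ] H) :=
  wstarClosure ((Submodule.span ℂ S : Submodule ℂ (H →L[ℂ] H)) : Set (H →L[ℂ] H))

/-- `alpha k S A` : the distance from `A` to `S` measured by rank at most `k`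
trace-class annihilators of `S` of trace norm at most one.  A rank `≤ k` trace class
operator `t` with `‖t‖₁ ≤ 1` is exactly one of the form `∑ i, v i ⊗ (u i)^*` with
`∑ i, ‖u i‖ * ‖v i‖ ≤ 1`, and then `tr (A t) = ∑ i, ⟪u i, A (v i)⟫`. -/
def alpha {H : Type*} [NormedAddCommGroup H] [InnerProductSpace ℂ H]
    (k : ℕ) (S : Set (H →L[ℂ] H)) (A : H →L[ℂ] H) : ℝ :=
  sSup {r : ℝ | ∃ u v : Fin k → H, (∑ i, ‖u i‖ * ‖v i‖) ≤ 1 ∧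
    (∀ T ∈ S, (∑ i, ⟪u i, T (v i)⟫_ℂ) = 0) ∧ r = ‖∑ i, ⟪u i, A (v i)⟫_ℂ‖}

/-- `S` is `k`-hyperreflexive with constant `C`, i.e. `κ_k(S) ≤ C`. -/
def HyperRefl {H : Type*} [NormedAddCommGroup H] [InnerProductSpace ℂ H]
    (k : ℕ) (C : ℝ) (S : Set (H →L[ℂ] H)) : Prop :=
  ∀ A : H →L[ℂ] H, Metric.infDist A S ≤ C * alpha k S A

/-- The norm of a linear functional on B(H). -/
def fnNorm {H : Type*} [NormedAddCommGroup H] [InnerProductSpace ℂ H]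
    (ψ : (H →L[ℂ] H) →ₗ[ℂ] ℂ) : ℝ :=
  sSup {c : ℝ | ∃ A : H →L[ℂ] H, ‖A‖ ≤ 1 ∧ c = ‖ψ A‖}

/-- Property `𝔸_{1/k}(r)`: every weak-star continuous functional is implemented on `S`
by a rank `≤ k` operator of trace norm at most `(r + ε)` times the norm of the functional. -/
def PropA {H : Type*} [NormedAddCommGroup H] [InnerProductSpace ℂ H]
    (k : ℕ) (r : ℝ) (S : Set (H →L[ℂ] H)) : Prop :=
  ∀ ψ : (H →L[ℂ] H) →ₗ[ℂ] ℂ, @Continuous _ _ (ultraweak H) _ ψ →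
    ∀ ε > (0 : ℝ), ∃ u v : Fin k → H,
      (∑ i, ‖u i‖ * ‖v i‖) ≤ (r + ε) * fnNorm ψ ∧
      ∀ T ∈ S, ψ T = ∑ i, ⟪u i, T (v i)⟫_ℂ

/-- The image of a set of operators under conjugation by a unitary `U`,
i.e. `U S U⁻¹`. -/
def conjSet {H K : Type*} [NormedAddCommGroup H] [InnerProductSpace ℂ H]
    [NormedAddCommGroup K] [InnerProductSpace ℂ K]
    (U : H ≃ₗᵢ[ℂ] K) (S : Set (H →L[ℂ] H)) : Set (K →L[ℂ] K) :=
  {B | ∃ A ∈ S, ∀ x : H, B (U x) = U (A x)}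

/-- The Toeplitz-harmonic subspace generated by an operator `A` : the weak-star closure of
`{p(A) + q(A)^* : p, q analytic polynomials}`. -/
def THarm {H : Type*} [NormedAddCommGroup H] [InnerProductSpace ℂ H] [CompleteSpace H]
    (A : H →L[ℂ] H) : Set (H →L[ℂ] H) :=
  wstarClosure {B | ∃ p q : Polynomial ℂ,
    B = Polynomial.aeval A p + ContinuousLinearMap.adjoint (Polynomial.aeval A q)}

/-- Quasinormality: `T` commutes with `T* T`. -/
def Quasinormal {H : Type*} [NormedAddCommGroup H] [InnerProductSpace ℂ H] [CompleteSpace H]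
    (T : H →L[ℂ] H) : Prop :=
  Commute T (ContinuousLinearMap.adjoint T * T)

end

noncomputable section
/-- A realization of the Hilbert space tensor product `H ⊗ K` as a Hilbert space `HK`
together with the canonical bilinear map. -/
structure IsHilbertTensor {H K HK : Type*}
    [NormedAddCommGroup H] [InnerProductSpace ℂ H]
    [NormedAddCommGroup K] [InnerProductSpace ℂ K]
    [NormedAddCommGroup HK] [InnerProductSpace ℂ HK]
    (t : H →ₗ[ℂ] K →ₗ[ℂ] HK) : Prop where
  inner_tmul : ∀ (x x' : H) (y y' : K),
    ⟪t x y, t x' y'⟫_ℂ = ⟪x, x'⟫_ℂ * ⟪y, y'⟫_ℂ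
  dense_span : Dense ((Submodule.span ℂ {z : HK | ∃ x y, z = t x y} : Submodule ℂ HK) : Set HK)

/-- The weak-star closed tensor product `S₁ ⊗ S₂` of two subspaces of operators,
realized on a Hilbert space tensor product `HK` of `H` and `K`. -/
def tensorSub {H K HK : Type*}
    [NormedAddCommGroup H] [InnerProductSpace ℂ H]
    [NormedAddCommGroup K] [InnerProductSpace ℂ K]
    [NormedAddCommGroup HK] [InnerProductSpace ℂ HK]
    (t : H →ₗ[ℂ] K →ₗ[ℂ] HK)
    (S₁ : Set (H →L[ℂ] H)) (S₂ : Set (K →L[ℂ] K)) : Set (HK →L[ℂ] HK) :=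
  wstarSpan {C : HK →L[ℂ] HK | ∃ A ∈ S₁, ∃ B ∈ S₂,
    ∀ (x : H) (y : K), C (t x y) = t (A x) (B y)}
end

open scoped ENNReal
noncomputable section
namespace PaperShift

/-- The underlying function of the unilateral shift of an `ℓ²` sequence. -/
def shiftFun {K : Type*} [NormedAddCommGroup K] (f : ℕ → K) : ℕ → K
  | 0 => 0
  | n + 1 => f n

lemma shiftFun_summable {K : Type*} [NormedAddCommGroup K] (f : ℕ → K)
    (hf : Summable fun n => ‖f n‖ ^ (2 : ℝ)) :
    Summable fun n => ‖shiftFun f n‖ ^ (2 : ℝ) := by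
  rw [← summable_nat_add_iff 1]
  simpa [shiftFun] using hf

lemma two_toReal : ((2 : ℝ≥0∞).toReal) = (2 : ℝ) := by norm_num

lemma shiftFun_memℓp {K : Type*} [NormedAddCommGroup K] (f : lp (fun _ : ℕ => K) 2) :
    Memℓp (shiftFun (f : ∀ _ : ℕ, K)) 2 := by
  apply memℓp_gen
  have h := (lp.memℓp f).summable (p := 2) (by rw [two_toReal]; norm_num)
  rw [two_toReal] at h ⊢
  exact shiftFun_summable _ h

lemma shiftFun_tsum {K : Type*} [NormedAddCommGroup K] (f : ℕ → K) :
    (∑' n, ‖shiftFun f n‖ ^ (2 : ℝ)) = ∑' n, ‖f n‖ ^ (2 : ℝ) := by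
  by_cases h : Summable fun n => ‖f n‖ ^ (2 : ℝ)
  · rw [Summable.tsum_eq_zero_add (shiftFun_summable f h)]
    simp [shiftFun]
  · have h2 : ¬ Summable fun n => ‖shiftFun f n‖ ^ (2 : ℝ) := fun hs =>
      h (by simpa [shiftFun] using (summable_nat_add_iff 1).2 hs)
    rw [tsum_eq_zero_of_not_summable h2, tsum_eq_zero_of_not_summable h]

/-- The unilateral shift, `S(e_n) = e_{n+1}`, as a linear isometry of `ℓ²(ℕ, K)`. -/
def shiftOp (K : Type*) [NormedAddCommGroup K] [InnerProductSpace ℂ K] :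
    lp (fun _ : ℕ => K) 2 →L[ℂ] lp (fun _ : ℕ => K) 2 :=
  LinearIsometry.toContinuousLinearMap
  { toFun := fun f => ⟨shiftFun (f : ∀ _ : ℕ, K), shiftFun_memℓp f⟩
    map_add' := by
      intro f g; ext n
      cases n <;> simp [shiftFun, lp.coeFn_add] <;> first | exact (add_zero (0 : K)).symm | rfl
    map_smul' := by
      intro c f; ext n
      cases n <;> simp [shiftFun]
    norm_map' := by
      intro f
      rw [lp.norm_eq_tsum_rpow (by rw [two_toReal]; norm_num),
        lp.norm_eq_tsum_rpow (by rw [two_toReal]; norm_num)]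
      congr 1
      rw [two_toReal]
      exact shiftFun_tsum (f : ∀ _ : ℕ, K) }

end PaperShift
end

noncomputable section
open PaperShift

/-- The weak operator topology on B(H). -/
def wot (H : Type*) [NormedAddCommGroup H] [InnerProductSpace ℂ H] :
    TopologicalSpace (H →L[ℂ] H) :=
  TopologicalSpace.induced (fun A => fun p : H × H => ⟪p.1, A p.2⟫_ℂ) Pi.topologicalSpace

/-- `W(A)`: the WOT-closed unital algebra generated by `A`. -/
def WOTAlg {H : Type*} [NormedAddCommGroup H] [InnerProductSpace ℂ H]
    (A : H →L[ℂ] H) : Set (H →L[ℂ] H) :=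
  @closure _ (wot H) ((Algebra.adjoin ℂ {A} : Subalgebra ℂ (H →L[ℂ] H)) : Set (H →L[ℂ] H))

/-- `N(N)`: the smallest von Neumann algebra containing `N` (and `I`). -/
def vNGen {H : Type*} [NormedAddCommGroup H] [InnerProductSpace ℂ H] [CompleteSpace H]
    (N : H →L[ℂ] H) : Set (H →L[ℂ] H) :=
  ⋂₀ {M : Set (H →L[ℂ] H) | ∃ M' : VonNeumannAlgebra H, M = ↑M' ∧ N ∈ M'}

/-- Block-diagonal direct sum `S₁ ⊕ S₂` of two subspaces of operators. -/
def blockDiag {H₁ H₂ : Type*} [NormedAddCommGroup H₁] [InnerProductSpace ℂ H₁]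
    [NormedAddCommGroup H₂] [InnerProductSpace ℂ H₂]
    (S₁ : Set (H₁ →L[ℂ] H₁)) (S₂ : Set (H₂ →L[ℂ] H₂)) :
    Set (WithLp 2 (H₁ × H₂) →L[ℂ] WithLp 2 (H₁ × H₂)) :=
  {C | ∃ T₁ ∈ S₁, ∃ T₂ ∈ S₂, ∀ x : WithLp 2 (H₁ × H₂),
    C x = (WithLp.equiv 2 (H₁ × H₂)).symm
      (T₁ ((WithLp.equiv 2 (H₁ × H₂)) x).1, T₂ ((WithLp.equiv 2 (H₁ × H₂)) x).2)}


/-!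
Conjugation by `U` is a weak-* continuous ⋆-isomorphism carrying `T` to `N ⊕ C`, so it sends
each generator `p(T) + q(T)*` of `T(T)` to `(p(N) + q(N)*) ⊕ (p(C) + q(C)*)`. The first block
lies in every von Neumann algebra containing `N`. Since `A = A*`, both `C` and `C*` act as
elementary tensors, `C^k = A^k ⊗ S^k` and `C*^k = A^k ⊗ S*^k`, so the second block lies in the
span of `W(A) ⊗ T(S)`. Finally `N(N) ⊕ (W(A) ⊗ T(S))` is weak-* closed: its members are cut out
by the vanishing of the off-diagonal corners and by weak-* closed conditions on the diagonal
corners (von Neumann algebras being double commutants, hence weak-* closed).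
-/
open scoped Topology
open ContinuousLinearMap Polynomial

section Ultraweak

variable {E F : Type*} [NormedAddCommGroup E] [InnerProductSpace ℂ E]
  [NormedAddCommGroup F] [InnerProductSpace ℂ F]

def UWPair.single (u v : E) : UWPair E :=
  ⟨(Pi.single 0 u, Pi.single 0 v), summable_of_ne_finset_zero (s := {0}) fun n hn => by
    simp [Finset.mem_singleton.not.1 hn]⟩

lemma UWPair.tsum_single (u v : E) (B : E →L[ℂ] E) :
    ∑' n, ⟪(UWPair.single u v).1.1 n, B ((UWPair.single u v).1.2 n)⟫_ℂ = ⟪u, B v⟫_ℂ := by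
  rw [tsum_eq_single 0 fun n hn => by simp [UWPair.single, hn]]
  simp [UWPair.single]

lemma continuous_ultraweak_pairing (p : UWPair E) :
    Continuous[ultraweak E, _] fun B : E →L[ℂ] E => ∑' n, ⟪p.1.1 n, B (p.1.2 n)⟫_ℂ :=
  @Continuous.comp _ _ _ (ultraweak E) Pi.topologicalSpace _ _ _ (continuous_apply p)
    continuous_induced_dom

lemma t2Space_ultraweak : @T2Space (E →L[ℂ] E) (ultraweak E) := by
  let := ultraweak E
  refine T2Space.of_injective_continuous (fun B B' h => ?_) continuous_induced_dom
  ext v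
  refine ext_inner_left ℂ fun u => ?_
  simpa only [UWPair.tsum_single] using congr_fun h (UWPair.single u v)

lemma continuous_ultraweak_compress [CompleteSpace E] [CompleteSpace F]
    (P : E →L[ℂ] F) (J : F →L[ℂ] E) :
    Continuous[ultraweak E, ultraweak F] fun B : E →L[ℂ] E => P ∘L B ∘L J := by
  let := ultraweak E
  refine continuous_induced_rng.2 (continuous_pi fun q => ?_)
  let p : UWPair E := ⟨(fun n => adjoint P (q.1.1 n), fun n => J (q.1.2 n)),
    q.2.mul_left (‖adjoint P‖ * ‖J‖) |>.of_nonneg_of_le (fun _ => by positivity) fun n => by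
      calc ‖adjoint P (q.1.1 n)‖ * ‖J (q.1.2 n)‖
          ≤ (‖adjoint P‖ * ‖q.1.1 n‖) * (‖J‖ * ‖q.1.2 n‖) := by gcongr <;> exact le_opNorm _ _
        _ = _ := by ring⟩
  exact (continuous_ultraweak_pairing p).congr fun B =>
    tsum_congr fun n => adjoint_inner_left P _ _

lemma isClosed_ultraweak_centralizer [CompleteSpace E] (s : Set (E →L[ℂ] E)) :
    IsClosed[ultraweak E] (Set.centralizer s) := by
  have mul_left (a : E →L[ℂ] E) : Continuous[ultraweak E, ultraweak E] (a * ·) :=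
    continuous_ultraweak_compress a 1
  have mul_right (a : E →L[ℂ] E) : Continuous[ultraweak E, ultraweak E] (· * a) :=
    continuous_ultraweak_compress 1 a
  let := ultraweak E
  have := t2Space_ultraweak (E := E)
  simp only [Set.centralizer, Set.ofPred_forall]
  exact isClosed_biInter fun a _ => isClosed_eq (mul_left a) (mul_right a)

lemma weakStarClosed_vNGen [CompleteSpace E] (N : E →L[ℂ] E) : WeakStarClosed (vNGen N) := by
  let := ultraweak E
  refine isClosed_sInter ?_
  rintro _ ⟨M, rfl, -⟩
  rw [← M.centralizer_centralizer]
  exact isClosed_ultraweak_centralizer _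

lemma conjSet_eq_image [CompleteSpace E] [CompleteSpace F] (U : E ≃ₗᵢ[ℂ] F)
    (S : Set (E →L[ℂ] E)) : conjSet U S = U.conjStarAlgEquiv '' S := by
  ext B
  refine exists_congr fun A => and_congr_right fun _ => ⟨fun h => ?_, ?_⟩
  · ext y
    simpa using (h (U.symm y)).symm
  · rintro rfl x
    simp

lemma conjSet_wstarClosure_subset [CompleteSpace E] [CompleteSpace F] (U : E ≃ₗᵢ[ℂ] F)
    {S : Set (E →L[ℂ] E)} {S' : Set (F →L[ℂ] F)} (hS' : WeakStarClosed S')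
    (h : Set.MapsTo U.conjStarAlgEquiv S S') : conjSet U (wstarClosure S) ⊆ S' := by
  let := ultraweak E
  let := ultraweak F
  rw [conjSet_eq_image]
  refine (image_closure_subset_closure_image ?_).trans (closure_minimal h.image_subset hS')
  exact continuous_ultraweak_compress (U.toContinuousLinearEquiv : E →L[ℂ] F)
    (U.symm.toContinuousLinearEquiv : F →L[ℂ] E)

end Ultraweak

section HarmonicEval

variable {R S : Type*} [Semiring R] [Algebra ℂ R] [Semiring S] [Algebra ℂ S]

lemma aeval_mem_span {a : R} {s : Set R} (h : ∀ i, a ^ i ∈ s) (p : ℂ[X]) :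
    aeval a p ∈ Submodule.span ℂ s := by
  rw [aeval_eq_sum_range]
  exact Submodule.sum_mem _ fun i _ => Submodule.smul_mem _ _ (Submodule.subset_span (h i))

variable [StarRing R] [StarRing S]

lemma star_aeval_mem_span [StarModule ℂ R] {a : R} {s : Set R} (h : ∀ i, star a ^ i ∈ s)
    (p : ℂ[X]) :
    star (aeval a p) ∈ Submodule.span ℂ s := by
  rw [aeval_eq_sum_range, star_sum]
  refine Submodule.sum_mem _ fun i _ => ?_
  rw [star_smul, star_pow]
  exact Submodule.smul_mem _ _ (Submodule.subset_span (h i))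

/-- The generators `p(a) + q(a)*` of the Toeplitz-harmonic subspace `THarm a`. -/
def harmonicEval (a : R) (p q : ℂ[X]) : R := aeval a p + star (aeval a q)

lemma map_harmonicEval (φ : R →⋆ₐ[ℂ] S) (a : R) (p q : ℂ[X]) :
    φ (harmonicEval a p q) = harmonicEval (φ a) p q := by
  simp only [harmonicEval, map_add, map_star, aeval_algHom_apply]

lemma harmonicEval_prod (a : R) (b : S) (p q : ℂ[X]) :
    harmonicEval (a, b) p q = (harmonicEval a p q, harmonicEval b p q) := by
  simp only [harmonicEval, aeval_prod_apply]
  rfl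

lemma harmonicEval_mem [StarModule ℂ R] {a : R} {A : StarSubalgebra ℂ R} (ha : a ∈ A)
    (p q : ℂ[X]) :
    harmonicEval a p q ∈ A := by
  have aeval_mem (r : ℂ[X]) : aeval a r ∈ A :=
    Algebra.adjoin_le (Set.singleton_subset_iff.2 ha) (aeval_mem_adjoin_singleton ℂ a)
  exact add_mem (aeval_mem p) (star_mem (aeval_mem q))

end HarmonicEval

section BlockDiag

@[ext] lemma WithLp.prod_ext {p : ENNReal} {α β : Type*} {x y : WithLp p (α × β)}
    (h₁ : x.fst = y.fst) (h₂ : x.snd = y.snd) : x = y :=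
  WithLp.ofLp_injective p (Prod.ext h₁ h₂)

variable (E F : Type*) [NormedAddCommGroup E] [InnerProductSpace ℂ E]
  [NormedAddCommGroup F] [InnerProductSpace ℂ F]

def WithLp.inlL : E →L[ℂ] WithLp 2 (E × F) :=
  (WithLp.prodContinuousLinearEquiv 2 ℂ E F).symm ∘L .inl ℂ E F

def WithLp.inrL : F →L[ℂ] WithLp 2 (E × F) :=
  (WithLp.prodContinuousLinearEquiv 2 ℂ E F).symm ∘L .inr ℂ E F

@[simp] lemma WithLp.inlL_apply (u : E) : WithLp.inlL E F u = WithLp.toLp 2 (u, 0) := rfl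

@[simp] lemma WithLp.inrL_apply (v : F) : WithLp.inrL E F v = WithLp.toLp 2 (0, v) := rfl

variable [CompleteSpace E] [CompleteSpace F]

def blockDiagHom :
    (E →L[ℂ] E) × (F →L[ℂ] F) →⋆ₐ[ℂ] (WithLp 2 (E × F) →L[ℂ] WithLp 2 (E × F)) where
  toFun XY := (WithLp.prodContinuousLinearEquiv 2 ℂ E F).symm ∘L XY.1.prodMap XY.2 ∘L
    (WithLp.prodContinuousLinearEquiv 2 ℂ E F)
  map_one' := rfl
  map_mul' _ _ := rfl
  map_zero' := rfl
  map_add' _ _ := rfl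
  commutes' _ := rfl
  map_star' XY := by
    refine (eq_adjoint_iff _ _).2 fun x y => ?_
    simp [star_eq_adjoint, adjoint_inner_left]

variable {E F}

@[simp] lemma blockDiagHom_apply (XY : (E →L[ℂ] E) × (F →L[ℂ] F)) (x : WithLp 2 (E × F)) :
    blockDiagHom E F XY x = WithLp.toLp 2 (XY.1 x.fst, XY.2 x.snd) := rfl

lemma blockDiagHom_mem_blockDiag {S₁ : Set (E →L[ℂ] E)} {S₂ : Set (F →L[ℂ] F)}
    {X : E →L[ℂ] E} {Y : F →L[ℂ] F} (hX : X ∈ S₁) (hY : Y ∈ S₂) :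
    blockDiagHom E F (X, Y) ∈ blockDiag S₁ S₂ :=
  ⟨X, hX, Y, hY, fun _ => rfl⟩

lemma mem_blockDiag_iff {S₁ : Set (E →L[ℂ] E)} {S₂ : Set (F →L[ℂ] F)}
    {X : WithLp 2 (E × F) →L[ℂ] WithLp 2 (E × F)} :
    X ∈ blockDiag S₁ S₂ ↔
      blockDiagHom E F (1, 0) ∘L X ∘L blockDiagHom E F (0, 1) = 0 ∧
      blockDiagHom E F (0, 1) ∘L X ∘L blockDiagHom E F (1, 0) = 0 ∧
      WithLp.fstL 2 ℂ E F ∘L X ∘L WithLp.inlL E F ∈ S₁ ∧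
      WithLp.sndL 2 ℂ E F ∘L X ∘L WithLp.inrL E F ∈ S₂ := by
  constructor
  · rintro ⟨X₁, hX₁, X₂, hX₂, hX⟩
    refine ⟨?_, ?_, ?_, ?_⟩
    · ext <;> simp [hX]
    · ext <;> simp [hX]
    · convert hX₁; ext; simp [hX]
    · convert hX₂; ext; simp [hX]
  · rintro ⟨h₁₂, h₂₁, h₁₁, h₂₂⟩
    refine ⟨_, h₁₁, _, h₂₂, fun x => ?_⟩
    have hx : x = WithLp.toLp 2 (x.fst, 0) + WithLp.toLp 2 (0, x.snd) := by ext <;> simp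
    have h₁₂x := congr_arg WithLp.fst (DFunLike.congr_fun h₁₂ x)
    have h₂₁x := congr_arg WithLp.snd (DFunLike.congr_fun h₂₁ x)
    simp only [comp_apply, blockDiagHom_apply, zero_apply, one_apply_eq_self, WithLp.toLp_fst,
      WithLp.zero_fst, WithLp.toLp_snd, WithLp.zero_snd] at h₁₂x h₂₁x
    conv_lhs => rw [hx, map_add]
    ext <;> simp [h₁₂x, h₂₁x]

lemma weakStarClosed_blockDiag {S₁ : Set (E →L[ℂ] E)} {S₂ : Set (F →L[ℂ] F)}
    (h₁ : WeakStarClosed S₁) (h₂ : WeakStarClosed S₂) : WeakStarClosed (blockDiag S₁ S₂) := by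
  let := ultraweak E
  let := ultraweak F
  let := ultraweak (WithLp 2 (E × F))
  have := t2Space_ultraweak (E := WithLp 2 (E × F))
  unfold WeakStarClosed
  rw [← Set.ofPred_mem_eq (s := blockDiag S₁ S₂)]
  simp only [mem_blockDiag_iff, Set.ofPred_and]
  exact (isClosed_eq (continuous_ultraweak_compress _ _) continuous_const).inter <|
    (isClosed_eq (continuous_ultraweak_compress _ _) continuous_const).inter <|
    (h₁.preimage (continuous_ultraweak_compress _ _)).inter
      (h₂.preimage (continuous_ultraweak_compress _ _))

end BlockDiag

section Generators

variable {E : Type*} [NormedAddCommGroup E] [InnerProductSpace ℂ E]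

lemma pow_mem_WOTAlg (A : E →L[ℂ] E) (i : ℕ) : A ^ i ∈ WOTAlg A :=
  @subset_closure _ (wot E) _ _ (pow_mem (Algebra.self_mem_adjoin_singleton ℂ A) i)

variable [CompleteSpace E]

lemma harmonicEval_mem_vNGen (N : E →L[ℂ] E) (p q : ℂ[X]) : harmonicEval N p q ∈ vNGen N :=
  Set.mem_sInter.2 fun _ ⟨M, hM, hN⟩ => hM ▸ harmonicEval_mem (A := M.toStarSubalgebra) hN p q

lemma harmonicEval_mem_THarm (B : E →L[ℂ] E) (p q : ℂ[X]) : harmonicEval B p q ∈ THarm B :=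
  @subset_closure _ (ultraweak E) _ _ ⟨p, q, rfl⟩

lemma pow_mem_THarm (B : E →L[ℂ] E) (i : ℕ) : B ^ i ∈ THarm B := by
  simpa [harmonicEval] using harmonicEval_mem_THarm B (X ^ i) 0

lemma star_pow_mem_THarm (B : E →L[ℂ] E) (i : ℕ) : star B ^ i ∈ THarm B := by
  simpa [harmonicEval, star_pow] using harmonicEval_mem_THarm B 0 (X ^ i)

end Generators

section Tensor

variable {K L HK : Type*} [NormedAddCommGroup K] [InnerProductSpace ℂ K]
  [NormedAddCommGroup L] [InnerProductSpace ℂ L] [NormedAddCommGroup HK] [InnerProductSpace ℂ HK]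
  {t : K →ₗ[ℂ] L →ₗ[ℂ] HK} {A : K →L[ℂ] K} {B : L →L[ℂ] L} {C : HK →L[ℂ] HK}

lemma IsHilbertTensor.ext_inner_tmul (ht : IsHilbertTensor t) {z w : HK}
    (h : ∀ x y, ⟪t x y, z⟫_ℂ = ⟪t x y, w⟫_ℂ) : z = w := by
  have heq : Set.EqOn (⟪·, z⟫_ℂ) (⟪·, w⟫_ℂ) (Submodule.span ℂ {v | ∃ x y, v = t x y}) := by
    intro v hv
    induction hv using Submodule.span_induction with
    | mem v hv => obtain ⟨x, y, rfl⟩ := hv; exact h x y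
    | zero => simp
    | add a b _ _ ha hb => simp only [inner_add_left, ha, hb]
    | smul c a _ ha => simp only [inner_smul_left, ha]
  exact ext_inner_left ℂ fun v => congr_fun (Continuous.ext_on ht.dense_span
    (continuous_id.inner continuous_const) (continuous_id.inner continuous_const) heq) v

lemma pow_apply_tmul (hC : ∀ x y, C (t x y) = t (A x) (B y)) (k : ℕ) (x : K) (y : L) :
    (C ^ k) (t x y) = t ((A ^ k) x) ((B ^ k) y) := by
  induction k with
  | zero => simp
  | succ k ih =>
    simp only [pow_succ']
    exact (congrArg C ih).trans (hC _ _)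

lemma IsHilbertTensor.adjoint_apply_tmul [CompleteSpace L] [CompleteSpace HK]
    (ht : IsHilbertTensor t) (hA : (A : K →ₗ[ℂ] K).IsSymmetric)
    (hC : ∀ x y, C (t x y) = t (A x) (B y)) (x : K) (y : L) :
    adjoint C (t x y) = t (A x) (adjoint B y) := by
  refine ht.ext_inner_tmul fun x' y' => ?_
  rw [adjoint_inner_right, hC, ht.inner_tmul, ht.inner_tmul, adjoint_inner_right]
  exact congrArg (· * _) (hA x' x)

lemma harmonicEval_mem_tensorSub [CompleteSpace L] [CompleteSpace HK] (ht : IsHilbertTensor t)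
    (hA : (A : K →ₗ[ℂ] K).IsSymmetric) (hC : ∀ x y, C (t x y) = t (A x) (B y)) (p q : ℂ[X]) :
    harmonicEval C p q ∈ tensorSub t (WOTAlg A) (THarm B) := by
  have pow_mem {C' : HK →L[ℂ] HK} {B' : L →L[ℂ] L} (hC' : ∀ x y, C' (t x y) = t (A x) (B' y))
      (hB' : ∀ i, B' ^ i ∈ THarm B) (i : ℕ) :
      C' ^ i ∈ {D : HK →L[ℂ] HK | ∃ A' ∈ WOTAlg A, ∃ B'' ∈ THarm B,
        ∀ x y, D (t x y) = t (A' x) (B'' y)} :=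
    ⟨A ^ i, pow_mem_WOTAlg A i, B' ^ i, hB' i, pow_apply_tmul hC' i⟩
  exact @subset_closure _ (ultraweak HK) _ _ <|
    add_mem (aeval_mem_span (pow_mem hC (pow_mem_THarm B)) p)
      (star_aeval_mem_span (pow_mem (ht.adjoint_apply_tmul hA hC) (star_pow_mem_THarm B)) q)

end Tensor

theorem toeplitz_harmonic_subset_model_general {H K₁ K₂ HK₂ : Type*}
    [NormedAddCommGroup H] [InnerProductSpace ℂ H] [CompleteSpace H]
    [NormedAddCommGroup K₁] [InnerProductSpace ℂ K₁] [CompleteSpace K₁]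
    [NormedAddCommGroup K₂] [InnerProductSpace ℂ K₂]
    [NormedAddCommGroup HK₂] [InnerProductSpace ℂ HK₂] [CompleteSpace HK₂]
    (t : K₂ →ₗ[ℂ] (lp (fun _ : ℕ => ℂ) 2) →ₗ[ℂ] HK₂) (ht : IsHilbertTensor t)
    (T : H →L[ℂ] H)
    (N : K₁ →L[ℂ] K₁)
    (A : K₂ →L[ℂ] K₂) (hA : A.IsPositive)
    (U : H ≃ₗᵢ[ℂ] WithLp 2 (K₁ × HK₂))
    (C : HK₂ →L[ℂ] HK₂)
    (hC : ∀ (y : K₂) (z : lp (fun _ : ℕ => ℂ) 2), C (t y z) = t (A y) (shiftOp ℂ z))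
    (hU : ∀ x : H, U (T x) = (WithLp.equiv 2 (K₁ × HK₂)).symm
      (N (((WithLp.equiv 2 (K₁ × HK₂)) (U x)).1),
       C (((WithLp.equiv 2 (K₁ × HK₂)) (U x)).2))) :
    conjSet U (THarm T) ⊆
      blockDiag (vNGen N) (tensorSub t (WOTAlg A) (THarm (shiftOp ℂ))) := by
  have hT : U.conjStarAlgEquiv.toStarAlgHom T = blockDiagHom K₁ HK₂ (N, C) := by
    ext1 y
    simpa using hU (U.symm y)
  refine conjSet_wstarClosure_subset U
    (weakStarClosed_blockDiag (weakStarClosed_vNGen N) (@isClosed_closure _ (ultraweak HK₂) _)) ?_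
  rintro _ ⟨p, q, rfl⟩
  change U.conjStarAlgEquiv.toStarAlgHom (harmonicEval T p q) ∈ _
  rw [map_harmonicEval, hT, ← map_harmonicEval (blockDiagHom K₁ HK₂), harmonicEval_prod]
  exact blockDiagHom_mem_blockDiag (harmonicEval_mem_vNGen N p q)
    (harmonicEval_mem_tensorSub ht hA.isSymmetric hC p q)

/-- if a quasinormal `T` is unitarily equivalent to `N ⊕ (A ⊗ S)`
(`N` normal, `A` positive, `S` the unilateral shift on `ℓ²(ℕ)`, and `K₂ ⊗ ℓ²(ℕ)`
realized as a Hilbert tensor product `HK₂`), then after conjugation by the same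
unitary the Toeplitz-harmonic subspace `T(T)` is contained in
`N(N) ⊕ (W(A) ⊗ T(S))`. -/
theorem toeplitz_harmonic_subset_model {H K₁ K₂ HK₂ : Type*}
    [NormedAddCommGroup H] [InnerProductSpace ℂ H] [CompleteSpace H]
    [TopologicalSpace.SeparableSpace H]
    [NormedAddCommGroup K₁] [InnerProductSpace ℂ K₁] [CompleteSpace K₁]
    [NormedAddCommGroup K₂] [InnerProductSpace ℂ K₂] [CompleteSpace K₂]
    [NormedAddCommGroup HK₂] [InnerProductSpace ℂ HK₂] [CompleteSpace HK₂]
    (t : K₂ →ₗ[ℂ] (lp (fun _ : ℕ => ℂ) 2) →ₗ[ℂ] HK₂) (ht : IsHilbertTensor t)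
    (T : H →L[ℂ] H) (hqn : Quasinormal T)
    (N : K₁ →L[ℂ] K₁) (hN : IsStarNormal N)
    (A : K₂ →L[ℂ] K₂) (hA : A.IsPositive)
    (U : H ≃ₗᵢ[ℂ] WithLp 2 (K₁ × HK₂))
    (C : HK₂ →L[ℂ] HK₂)
    (hC : ∀ (y : K₂) (z : lp (fun _ : ℕ => ℂ) 2), C (t y z) = t (A y) (shiftOp ℂ z))
    (hU : ∀ x : H, U (T x) = (WithLp.equiv 2 (K₁ × HK₂)).symm
      (N (((WithLp.equiv 2 (K₁ × HK₂)) (U x)).1),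
       C (((WithLp.equiv 2 (K₁ × HK₂)) (U x)).2))) :
    conjSet U (THarm T) ⊆
      blockDiag (vNGen N) (tensorSub t (WOTAlg A) (THarm (shiftOp ℂ))) :=
  toeplitz_harmonic_subset_model_general t ht T N A hA U C hC hU
end
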